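/- Let d ≥ 2 and a ∈ L¹(ℝ^d). Then for all φ, ψ ∈ L²(S^{d-1}), the function x ↦ a(x)(Iφ)(x)·conj((Iψ)(x)) is integrable on ℝ^d and ∫_{ℝ^d} a(x)(Iφ)(x) conj((Iψ)(x)) dx = (π/(2π)^{d/2}) ∫_{S^{d-1}} ∫_{S^{d-1}} â(η−ξ) φ(ξ) conj(ψ(η)) dS(ξ) dS(η). In particular, the Toeplitz operator with symbol a, acting on the Herglotz space, is unitarily equivalent to the integral operator on L²(S^{d-1}) with kernel (π/(2π)^{d/2}) â(η−ξ). -/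

import Mathlib

open MeasureTheory Filter Metric ComplexConjugate

noncomputable section

/-- Euclidean space ℝ^d. -/
abbrev Ed (d : ℕ) : Type := EuclideanSpace ℝ (Fin d)

/-- The surface measure on the unit sphere S^{d-1} ⊂ ℝ^d, realized as the
(d-1)-dimensional Hausdorff measure restricted to the sphere. -/
def surf (d : ℕ) : Measure (Ed d) := (μH[(d : ℝ) - 1]).restrict (sphere (0 : Ed d) 1)

/-- The constant c_d = √π / (2π)^{d/2}. -/
def cd (d : ℕ) : ℝ := Real.sqrt Real.pi / (2 * Real.pi) ^ ((d : ℝ) / 2)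

/-- The Herglotz wave function Iφ(x) = c_d ∫_{S^{d-1}} φ(ξ) e^{i x·ξ} dS(ξ). -/
def herg (d : ℕ) (φ : Ed d → ℂ) (x : Ed d) : ℂ :=
  (cd d : ℂ) * ∫ ξ, φ ξ * Complex.exp (Complex.I * ((inner ℝ x ξ : ℝ) : ℂ)) ∂(surf d)

/-- The Fourier transform â(ζ) = (2π)^{-d/2} ∫_{ℝ^d} e^{-i x·ζ} a(x) dx. -/
def ftr (d : ℕ) (a : Ed d → ℂ) (ζ : Ed d) : ℂ :=
  (((2 * Real.pi) ^ (-(d : ℝ) / 2) : ℝ) : ℂ) *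
    ∫ x, Complex.exp (-Complex.I * ((inner ℝ x ζ : ℝ) : ℂ)) * a x

/-!
Expanding both Herglotz wave functions, `a x * herg d φ x * conj (herg d ψ x)` is `c_d²` times
the integral over `S^{d-1} × S^{d-1}` of `a x * conj (ψ η) * φ ξ * e^{-i x·(η - ξ)}`. Since the
plane wave has modulus one, this integrand is integrable on `ℝ^d × S^{d-1} × S^{d-1}` as soon as
`a`, `φ`, `ψ` are integrable, and Fubini lets us integrate in `x` first, which produces
`(2π)^{d/2} â(η - ξ)`.

Both integrability of `φ, ψ ∈ L²` and Fubini need the surface measure to be finite. The sphere is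
covered by the radial projections of the `2d` faces of the cube `[-1, 1]^d`; each is a smooth, hence
Lipschitz, image of a cube in `ℝ^{d-1}`, so its `(d-1)`-dimensional Hausdorff measure is finite.
-/

theorem hausdorffMeasure_image_lt_top_of_contDiffOn {ι E : Type*} [Fintype ι]
    [NormedAddCommGroup E] [NormedSpace ℝ E] [MeasurableSpace E] [BorelSpace E]
    {f : (ι → ℝ) → E} {s : Set (ι → ℝ)} {k : WithTop ℕ∞} (hf : ContDiffOn ℝ k f s) (hk : k ≠ 0)
    (hs : Convex ℝ s) (hs' : IsCompact s) : μH[Fintype.card ι] (f '' s) < ⊤ := by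
  obtain ⟨K, hK⟩ := hf.exists_lipschitzOnWith hk hs hs'
  calc μH[Fintype.card ι] (f '' s) ≤ K ^ (Fintype.card ι : ℝ) * μH[Fintype.card ι] s :=
        hK.hausdorffMeasure_image_le (Nat.cast_nonneg _)
    _ < ⊤ := by
        rw [hausdorffMeasure_pi_real]
        exact ENNReal.mul_lt_top (by simp) hs'.measure_lt_top

def cubeFace {n : ℕ} (i : Fin (n + 1)) (c : ℝ) (y : Fin n → ℝ) : EuclideanSpace ℝ (Fin (n + 1)) :=
  WithLp.toLp 2 (Fin.insertNth (α := fun _ => ℝ) i c y)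

theorem contDiff_cubeFace {n : ℕ} (i : Fin (n + 1)) (c : ℝ) : ContDiff ℝ ⊤ (cubeFace i c) := by
  refine PiLp.contDiff_toLp.comp (contDiff_pi.2 fun j => ?_)
  cases j using Fin.succAboveCases i with
  | x => simpa using contDiff_const
  | p k => simpa using contDiff_apply ℝ ℝ k

theorem cubeFace_ne_zero {n : ℕ} (i : Fin (n + 1)) {c : ℝ} (hc : c ≠ 0) (y : Fin n → ℝ) :
    cubeFace i c y ≠ 0 := fun h => hc (by simpa [cubeFace] using congr($h i))

theorem contDiff_normalize_cubeFace {n : ℕ} (i : Fin (n + 1)) {c : ℝ} (hc : c ≠ 0) :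
    ContDiff ℝ ⊤ (fun y => ‖cubeFace i c y‖⁻¹ • cubeFace i c y) :=
  contDiff_iff_contDiffAt.2 fun y =>
    (((contDiff_cubeFace i c).contDiffAt.norm ℝ (cubeFace_ne_zero i hc y)).inv
      (norm_ne_zero_iff.2 (cubeFace_ne_zero i hc y))).smul (contDiff_cubeFace i c).contDiffAt

theorem sphere_subset_iUnion_normalize_cubeFace (n : ℕ) :
    sphere (0 : EuclideanSpace ℝ (Fin (n + 1))) 1 ⊆
      ⋃ i, ⋃ c ∈ ({-1, 1} : Set ℝ),
        (fun y => ‖cubeFace i c y‖⁻¹ • cubeFace i c y) '' closedBall 0 1 := by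
  intro x hx
  -- `x` is the radial projection of `x / |x i|`, which lies on a face of the cube when `|x i|` is
  -- the largest coordinate.
  obtain ⟨i, hi⟩ := Finite.exists_max fun j => |x j|
  have hm : 0 < |x i| := by
    by_contra! h
    have : x = 0 := by
      ext j; simpa using (hi j).trans h
    simp [this] at hx
  set m := |x i|
  have hface : cubeFace i (x i / m) (fun k => x (i.succAbove k) / m) = m⁻¹ • x := by
    ext j
    cases j using Fin.succAboveCases i with
    | x => simp [cubeFace, div_eq_inv_mul]
    | p k => simp [cubeFace, div_eq_inv_mul]
  refine Set.mem_iUnion.2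
    ⟨i, Set.mem_iUnion₂.2 ⟨x i / m, ?_, fun k => x (i.succAbove k) / m, ?_, ?_⟩⟩
  · have hxi : x i ≠ 0 := abs_pos.1 hm
    rcases abs_choice (x i) with h | h <;> simp [m, h, hxi]
  · rw [mem_closedBall, dist_zero_right, pi_norm_le_iff_of_nonneg zero_le_one]
    intro k
    rw [Real.norm_eq_abs, abs_div, abs_of_pos hm, div_le_one hm]
    exact hi _
  · dsimp only
    rw [hface, norm_smul, mem_sphere_zero_iff_norm.1 hx, mul_one, norm_inv, Real.norm_eq_abs,
      abs_of_pos hm, inv_inv, smul_inv_smul₀ hm.ne']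

theorem hausdorffMeasure_sphere_lt_top (n : ℕ) :
    μH[n] (sphere (0 : EuclideanSpace ℝ (Fin (n + 1))) 1) < ⊤ := by
  refine (measure_mono (sphere_subset_iUnion_normalize_cubeFace n)).trans_lt ?_
  refine (measure_iUnion_fintype_le _ _).trans_lt (ENNReal.sum_lt_top.2 fun i _ => ?_)
  refine measure_biUnion_lt_top (Set.toFinite _) fun c hc => ?_
  have hc0 : c ≠ 0 := by rcases hc with rfl | rfl <;> norm_num
  simpa using hausdorffMeasure_image_lt_top_of_contDiffOn
    (contDiff_normalize_cubeFace i hc0).contDiffOn (by simp) (convex_closedBall 0 1)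
    (isCompact_closedBall 0 1)

instance isFiniteMeasure_surf (d : ℕ) : IsFiniteMeasure (surf d) := by
  constructor
  rw [surf, Measure.restrict_apply_univ]
  cases d with
  | zero => simp [sphere_eq_empty_of_subsingleton]
  | succ n => simpa using hausdorffMeasure_sphere_lt_top n

section PlaneWaves

variable {d : ℕ}

theorem integral_mul_exp_mul_conj_integral_mul_exp (μ : Measure (Ed d)) [SFinite μ]
    (φ ψ : Ed d → ℂ) (x : Ed d) :
    (∫ ξ, φ ξ * Complex.exp (Complex.I * ((inner ℝ x ξ : ℝ) : ℂ)) ∂μ) *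
        conj (∫ η, ψ η * Complex.exp (Complex.I * ((inner ℝ x η : ℝ) : ℂ)) ∂μ) =
      ∫ p : Ed d × Ed d, conj (ψ p.1) * φ p.2 *
        Complex.exp (-Complex.I * ((inner ℝ x (p.1 - p.2) : ℝ) : ℂ)) ∂(μ.prod μ) := by
  rw [← integral_conj, mul_comm, ← integral_prod_mul]
  congr 1 with p
  rw [map_mul, ← Complex.exp_conj, inner_sub_right]
  simp only [map_mul, Complex.conj_I, Complex.conj_ofReal]
  rw [mul_mul_mul_comm, ← Complex.exp_add]
  push_cast
  ring_nf

theorem herg_mul_conj_herg (φ ψ : Ed d → ℂ) (x : Ed d) :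
    herg d φ x * conj (herg d ψ x) =
      (cd d : ℂ) ^ 2 * ∫ p : Ed d × Ed d, conj (ψ p.1) * φ p.2 *
        Complex.exp (-Complex.I * ((inner ℝ x (p.1 - p.2) : ℝ) : ℂ)) ∂((surf d).prod (surf d)) := by
  rw [herg, herg, map_mul, Complex.conj_ofReal, mul_mul_mul_comm,
    integral_mul_exp_mul_conj_integral_mul_exp, sq]

theorem integrable_mul_exp_mul_conj_mul {ν μ : Measure (Ed d)} [SFinite ν] [SFinite μ]
    {a φ ψ : Ed d → ℂ} (ha : Integrable a ν) (hφ : Integrable φ μ) (hψ : Integrable ψ μ) :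
    Integrable (fun q : Ed d × (Ed d × Ed d) => a q.1 * (conj (ψ q.2.1) * φ q.2.2 *
      Complex.exp (-Complex.I * ((inner ℝ q.1 (q.2.1 - q.2.2) : ℝ) : ℂ))))
      (ν.prod (μ.prod μ)) := by
  have hamp : Integrable (fun q : Ed d × (Ed d × Ed d) => a q.1 * (conj (ψ q.2.1) * φ q.2.2))
      (ν.prod (μ.prod μ)) :=
    ha.mul_prod (((Complex.conjCLE : ℂ →L[ℝ] ℂ).integrable_comp hψ).mul_prod hφ)
  have hwave : Continuous fun q : Ed d × (Ed d × Ed d) =>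
      Complex.exp (-Complex.I * ((inner ℝ q.1 (q.2.1 - q.2.2) : ℝ) : ℂ)) := by fun_prop
  refine (hamp.mul_bdd hwave.aestronglyMeasurable (c := 1) (ae_of_all _ fun q => ?_)).congr
    (ae_of_all _ fun q => by ring)
  rw [Complex.norm_exp]
  simp

theorem integral_exp_mul_eq_ftr (a : Ed d → ℂ) (ζ : Ed d) :
    ∫ x, Complex.exp (-Complex.I * ((inner ℝ x ζ : ℝ) : ℂ)) * a x =
      (((2 * Real.pi) ^ ((d : ℝ) / 2) : ℝ) : ℂ) * ftr d a ζ := by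
  have h2π : (0 : ℝ) < 2 * Real.pi := by positivity
  rw [ftr, ← mul_assoc, ← Complex.ofReal_mul, ← Real.rpow_add h2π, neg_div, add_neg_cancel,
    Real.rpow_zero, Complex.ofReal_one, one_mul]

theorem integral_mul_mul_exp_eq_ftr (a φ ψ : Ed d → ℂ) (p : Ed d × Ed d) :
    ∫ x, a x * (conj (ψ p.1) * φ p.2 *
        Complex.exp (-Complex.I * ((inner ℝ x (p.1 - p.2) : ℝ) : ℂ))) =
      (((2 * Real.pi) ^ ((d : ℝ) / 2) : ℝ) : ℂ) * (ftr d a (p.1 - p.2) * φ p.2 * conj (ψ p.1)) := by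
  calc _ = conj (ψ p.1) * φ p.2 *
        ∫ x, Complex.exp (-Complex.I * ((inner ℝ x (p.1 - p.2) : ℝ) : ℂ)) * a x := by
        rw [← integral_const_mul]
        congr 1 with x
        ring
    _ = _ := by
        rw [integral_exp_mul_eq_ftr]
        ring

theorem cd_sq_mul :
    cd d ^ 2 * (2 * Real.pi) ^ ((d : ℝ) / 2) = Real.pi / (2 * Real.pi) ^ ((d : ℝ) / 2) := by
  have hpos : (0 : ℝ) < (2 * Real.pi) ^ ((d : ℝ) / 2) := by positivity
  rw [cd, div_pow, Real.sq_sqrt Real.pi_pos.le]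
  field_simp

end PlaneWaves

theorem statement2_general (d : ℕ) (a : Ed d → ℂ) (ha : Integrable a)
    (φ ψ : Ed d → ℂ) (hφ : MemLp φ 2 (surf d)) (hψ : MemLp ψ 2 (surf d)) :
    Integrable (fun x => a x * herg d φ x * conj (herg d ψ x)) ∧
    ∫ x, a x * herg d φ x * conj (herg d ψ x) =
      ((Real.pi / (2 * Real.pi) ^ ((d : ℝ) / 2) : ℝ) : ℂ) *
        ∫ η, (∫ ξ, ftr d a (η - ξ) * φ ξ * conj (ψ η) ∂(surf d)) ∂(surf d) := by
  set F : Ed d → Ed d × Ed d → ℂ := fun x p => a x * (conj (ψ p.1) * φ p.2 *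
    Complex.exp (-Complex.I * ((inner ℝ x (p.1 - p.2) : ℝ) : ℂ)))
  have hF : Integrable (Function.uncurry F) (volume.prod ((surf d).prod (surf d))) :=
    integrable_mul_exp_mul_conj_mul ha (hφ.integrable one_le_two) (hψ.integrable one_le_two)
  have hherg (x : Ed d) : a x * herg d φ x * conj (herg d ψ x) =
      (cd d : ℂ) ^ 2 * ∫ p, F x p ∂((surf d).prod (surf d)) := by
    rw [mul_assoc, herg_mul_conj_herg, mul_left_comm, ← integral_const_mul]
  have hkernel : Integrable (fun p : Ed d × Ed d => ftr d a (p.1 - p.2) * φ p.2 * conj (ψ p.1))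
      ((surf d).prod (surf d)) := by
    refine (integrable_const_mul_iff (isUnit_iff_ne_zero.2 ?_) _).1
      (hF.integral_prod_right.congr (ae_of_all _ (integral_mul_mul_exp_eq_ftr a φ ψ)))
    exact Complex.ofReal_ne_zero.2 (by positivity)
  simp only [hherg]
  refine ⟨hF.integral_prod_left.const_mul _, ?_⟩
  calc ∫ x, (cd d : ℂ) ^ 2 * ∫ p, F x p ∂((surf d).prod (surf d))
      = (cd d : ℂ) ^ 2 * ∫ p, (∫ x, F x p) ∂((surf d).prod (surf d)) := by
        rw [integral_const_mul, integral_integral_swap hF]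
    _ = ((cd d ^ 2 * (2 * Real.pi) ^ ((d : ℝ) / 2) : ℝ) : ℂ) *
          ∫ p, ftr d a (p.1 - p.2) * φ p.2 * conj (ψ p.1) ∂((surf d).prod (surf d)) := by
        simp only [F, integral_mul_mul_exp_eq_ftr]
        rw [integral_const_mul]
        push_cast
        ring
    _ = _ := by rw [cd_sq_mul, integral_prod _ hkernel]

/-- for a ∈ L¹(ℝ^d) and φ, ψ ∈ L²(S^{d-1}), the function
a·(Iφ)·conj(Iψ) is integrable and
∫ a (Iφ) conj(Iψ) = (π/(2π)^{d/2}) ∫∫ â(η-ξ) φ(ξ) conj(ψ(η)) dS(ξ) dS(η). -/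
theorem statement2 (d : ℕ) (hd : 2 ≤ d) (a : Ed d → ℂ) (ha : Integrable a)
    (φ ψ : Ed d → ℂ) (hφ : MemLp φ 2 (surf d)) (hψ : MemLp ψ 2 (surf d)) :
    Integrable (fun x => a x * herg d φ x * conj (herg d ψ x)) ∧
    ∫ x, a x * herg d φ x * conj (herg d ψ x) =
      ((Real.pi / (2 * Real.pi) ^ ((d : ℝ) / 2) : ℝ) : ℂ) *
        ∫ η, (∫ ξ, ftr d a (η - ξ) * φ ξ * conj (ψ η) ∂(surf d)) ∂(surf d) :=
  statement2_general d a ha φ ψ hφ hψ
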